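/- Let J be a monomial ideal of Borel type in S = k[x_1,...,x_n], and set Φ_r(J) = J : (x_{r+1}···x_n)^∞. If J has minimal monomial generators u_1,...,u_m, then Φ_r(J) is generated by the monomials Φ_r(u_1),...,Φ_r(u_m), where Φ_r(u) is the monomial obtained from u by deleting all factors x_{r+1},...,x_n. -/

import Mathlib

open MvPolynomial Finsupp Module

namespace Paper

variable {k : Type*} [Field k] {n : ℕ}

/-- `J` is a monomial ideal: generated by a set of monomials. -/
def IsMonomialIdeal (J : Ideal (MvPolynomial (Fin n) k)) : Prop :=
  ∃ G : Set (Fin n →₀ ℕ),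
    J = Ideal.span ((fun d => (monomial d (1:k) : MvPolynomial (Fin n) k)) '' G)

/-- The Borel-type condition: for `i < j` and a monomial `x^d ∈ J` with `x_j ∣ x^d`,
some `x_i^s · x^d / x_j` lies in `J`. -/
def BorelCond (J : Ideal (MvPolynomial (Fin n) k)) : Prop :=
  ∀ i j : Fin n, i < j → ∀ d : Fin n →₀ ℕ,
    (monomial d (1:k) : MvPolynomial (Fin n) k) ∈ J → d j ≠ 0 →
    ∃ s : ℕ,
      (monomial (d + Finsupp.single i s - Finsupp.single j 1) (1:k) :
        MvPolynomial (Fin n) k) ∈ J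

/-- `J` is a monomial ideal of Borel type. -/
def IsBorelType (J : Ideal (MvPolynomial (Fin n) k)) : Prop :=
  IsMonomialIdeal J ∧ BorelCond J

/-- The saturation `J : I^∞`. -/
noncomputable def sat (J I : Ideal (MvPolynomial (Fin n) k)) : Ideal (MvPolynomial (Fin n) k) :=
  ⨆ m : ℕ, Submodule.colon J ((I ^ m) : Ideal (MvPolynomial (Fin n) k))

/-- The product of the variables with (0-based) index `≥ r`, i.e. `x_{r+1} ⋯ x_n`. -/
noncomputable def tailProd (k : Type*) [Field k] (n r : ℕ) : MvPolynomial (Fin n) k :=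
  ∏ i ∈ Finset.univ.filter (fun i : Fin n => r ≤ (i : ℕ)), X i

/-- `Φ_r(J) = J : (x_{r+1} ⋯ x_n)^∞`. -/
noncomputable def Phi (r : ℕ) (J : Ideal (MvPolynomial (Fin n) k)) :
    Ideal (MvPolynomial (Fin n) k) :=
  sat J (Ideal.span {tailProd k n r})

/-- The projection `Π_r : k[x_1,…,x_n] → k[x_1,…,x_r]` sending `x_{r+1},…,x_n` to `0`. -/
noncomputable def projDown (k : Type*) [Field k] (n r : ℕ) :
    MvPolynomial (Fin n) k →ₐ[k] MvPolynomial (Fin r) k :=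
  aeval (fun i : Fin n => if h : (i : ℕ) < r then X ⟨i, h⟩ else 0)

/-- `Π_r(J)`, the image ideal of `J` in `k[x_1,…,x_r]`. -/
noncomputable def PiIdeal (r : ℕ) (J : Ideal (MvPolynomial (Fin n) k)) :
    Ideal (MvPolynomial (Fin r) k) :=
  J.map (projDown k n r).toRingHom

/-- The exponent `d` is a minimal generator of the monomial ideal `J`. -/
def IsMinGen (J : Ideal (MvPolynomial (Fin n) k)) (d : Fin n →₀ ℕ) : Prop :=
  (monomial d (1:k) : MvPolynomial (Fin n) k) ∈ J ∧
    ∀ d' : Fin n →₀ ℕ, d' ≤ d →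
      (monomial d' (1:k) : MvPolynomial (Fin n) k) ∈ J → d' = d

/-- The leading exponent of a polynomial with respect to a monomial order. -/
noncomputable def leadExp (m : MonomialOrder (Fin n)) (f : MvPolynomial (Fin n) k) :
    Fin n →₀ ℕ :=
  m.toSyn.symm (f.support.sup fun d => m.toSyn d)

/-- The initial ideal of `P` with respect to the monomial order `m`. -/
noncomputable def initialIdeal (m : MonomialOrder (Fin n)) (P : Ideal (MvPolynomial (Fin n) k)) :
    Ideal (MvPolynomial (Fin n) k) :=
  Ideal.span {g | ∃ f ∈ P, f ≠ 0 ∧ g = (monomial (leadExp m f) (1:k) : MvPolynomial (Fin n) k)}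

/-- A homogeneous ideal: closed under taking homogeneous components. -/
def IsHomogIdeal (P : Ideal (MvPolynomial (Fin n) k)) : Prop :=
  ∀ f ∈ P, ∀ i : ℕ, homogeneousComponent i f ∈ P

/-- The ideal generated by the variables `x_1, …, x_{i+1}` (0-based indices `≤ i`). -/
noncomputable def varIdealLe (k : Type*) [Field k] {n : ℕ} (i : Fin n) :
    Ideal (MvPolynomial (Fin n) k) :=
  Ideal.span ((fun j : Fin n => (X j : MvPolynomial (Fin n) k)) '' {j | j ≤ i})

/-- The Hilbert series of `S/I` as a power series with integer coefficients. -/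
noncomputable def hilb {N : ℕ} (I : Ideal (MvPolynomial (Fin N) k)) : PowerSeries ℤ :=
  PowerSeries.mk fun i =>
    (Module.finrank k (Submodule.map (Ideal.Quotient.mkₐ k I).toLinearMap
      (homogeneousSubmodule (Fin N) k i)) : ℤ)

/-- The `i`-th Hilbert coefficient read off from the numerator polynomial `q`:
the coefficient of `(t-1)^i` in `q`. -/
noncomputable def hc (q : Polynomial ℤ) (i : ℕ) : ℤ :=
  (Polynomial.taylor 1 q).coeff i

/-- The Krull dimension of the quotient ring `S/I`. -/
noncomputable def qdim {N : ℕ} (I : Ideal (MvPolynomial (Fin N) k)) : WithBot (WithTop ℕ) :=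
  ringKrullDim (MvPolynomial (Fin N) k ⧸ I)

/-- The embedding `k[x_1,…,x_r] → k[x_1,…,x_n]`. -/
noncomputable def inclUp (k : Type*) [Field k] {r n : ℕ} (h : r ≤ n) :
    MvPolynomial (Fin r) k →ₐ[k] MvPolynomial (Fin n) k :=
  rename (Fin.castLE h)

/-- The embedding of variables for the tail subring `k[x_{r+1},…,x_n]`. -/
def tailEmb (n r : ℕ) (h : r ≤ n) : Fin (n - r) → Fin n :=
  fun j => ⟨r + j.1, by omega⟩

/-- The inclusion `k[x_{r+1},…,x_n] → k[x_1,…,x_n]` as a ring hom. -/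
noncomputable def tailIncl (k : Type*) [Field k] {n : ℕ} (r : ℕ) (h : r ≤ n) :
    MvPolynomial (Fin (n - r)) k →+* MvPolynomial (Fin n) k :=
  (rename (tailEmb n r h)).toRingHom

/-- `J₁ = (J ∩ k[x_1,…,x_r])S`: the ideal generated by the monomials of `J`
lying in `k[x_1,…,x_r]`. -/
noncomputable def Jone (r : ℕ) (J : Ideal (MvPolynomial (Fin n) k)) :
    Ideal (MvPolynomial (Fin n) k) :=
  Ideal.span {g | ∃ d : Fin n →₀ ℕ, (∀ i : Fin n, r ≤ (i : ℕ) → d i = 0) ∧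
    (monomial d (1:k) : MvPolynomial (Fin n) k) ∈ J ∧
    g = (monomial d (1:k) : MvPolynomial (Fin n) k)}

/-- The quotient module `J₂/J₁` for ideals `J₁ ≤ J₂`. -/
abbrev quotMod (J₁ J₂ : Ideal (MvPolynomial (Fin n) k)) :=
  (J₂ : Submodule (MvPolynomial (Fin n) k) (MvPolynomial (Fin n) k)) ⧸
    (Submodule.comap
      (J₂ : Submodule (MvPolynomial (Fin n) k) (MvPolynomial (Fin n) k)).subtype
      (J₁ : Submodule (MvPolynomial (Fin n) k) (MvPolynomial (Fin n) k)))

/-- `J₂/J₁` as a module over `k[x_{r+1},…,x_n]`. -/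
noncomputable def quotModTail (r : ℕ) (h : r ≤ n) (J₁ J₂ : Ideal (MvPolynomial (Fin n) k)) :
    Module (MvPolynomial (Fin (n - r)) k) (quotMod J₁ J₂) :=
  Module.compHom _ (tailIncl k r h)

/-- The degrevlex property of a monomial order: compare total degrees first, and break
ties by the *last* variable in which the exponents differ, where *larger* exponent
means *smaller* monomial. -/
def IsDegRevLex (m : MonomialOrder (Fin n)) : Prop :=
  ∀ a b : Fin n →₀ ℕ, (m.toSyn a < m.toSyn b) ↔
    ((a.sum fun _ e => e) < (b.sum fun _ e => e) ∨
      ((a.sum fun _ e => e) = (b.sum fun _ e => e) ∧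
        ∃ i : Fin n, b i < a i ∧ ∀ j : Fin n, i < j → a j = b j))

end Paper

open Paper MvPolynomial

/-!
Saturating a monomial ideal by a product of variables `∏_{i ∈ s} x_i` erases these variables
from its generators: `x^d` divides `(∏_{i ∈ s} x_i)^m · x^{d|_{∉ s}}` once `m ≥ deg d`, and
conversely, if a generator `x^d` divides `(∏_{i ∈ s} x_i)^m · x^e`, then `x^{d|_{∉ s}}` divides
`x^e`, since the two products agree off `s`.
-/

section Saturation

variable {k : Type*} [Field k] {n : ℕ}

theorem mem_sat_span_singleton_iff {J : Ideal (MvPolynomial (Fin n) k)}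
    {p f : MvPolynomial (Fin n) k} : f ∈ sat J (Ideal.span {p}) ↔ ∃ m : ℕ, p ^ m * f ∈ J := by
  have hmono : Monotone fun m : ℕ =>
      Submodule.colon J ((Ideal.span {p} ^ m : Ideal (MvPolynomial (Fin n) k)) :
        Set (MvPolynomial (Fin n) k)) :=
    fun _ _ hab => Submodule.colon_mono le_rfl (Ideal.pow_le_pow_right hab)
  rw [sat, Submodule.mem_iSup_of_directed _ hmono.directed_le]
  simp only [Ideal.span_singleton_pow, Ideal.mem_colon_span_singleton, mul_comm f]

theorem prod_X_pow_eq_monomial_sum_single {σ R : Type*} [CommSemiring R] (s : Finset σ) (m : ℕ) :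
    (∏ i ∈ s, X i) ^ m = monomial (∑ i ∈ s, Finsupp.single i m) (1 : R) := by
  rw [monomial_sum_one, ← Finset.prod_pow]
  simp only [X_pow_eq_monomial]

theorem sum_single_apply_of_notMem {σ M : Type*} [AddCommMonoid M] {s : Finset σ} {j : σ}
    (hj : j ∉ s) (m : M) :
    (∑ i ∈ s, Finsupp.single i m) j = 0 := by
  classical
  simp [Finsupp.finsetSum_apply, Finsupp.single_apply, hj]

theorem sum_single_apply_of_mem {σ M : Type*} [AddCommMonoid M] {s : Finset σ} {j : σ}
    (hj : j ∈ s) (m : M) :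
    (∑ i ∈ s, Finsupp.single i m) j = m := by
  classical
  simp [Finsupp.finsetSum_apply, Finsupp.single_apply, hj]

theorem sat_span_monomial_span_prod_X (G : Set (Fin n →₀ ℕ)) (s : Finset (Fin n)) :
    sat (Ideal.span ((fun d => monomial d (1 : k)) '' G)) (Ideal.span {∏ i ∈ s, X i}) =
      Ideal.span ((fun d : Fin n →₀ ℕ => monomial (d.filter (· ∉ s)) (1 : k)) '' G) := by
  apply le_antisymm
  · intro f hf
    obtain ⟨m, hm⟩ := mem_sat_span_singleton_iff.mp hf
    rw [prod_X_pow_eq_monomial_sum_single, mem_ideal_span_monomial_image] at hm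
    rw [← Set.image_image (fun d => monomial d (1 : k)), mem_ideal_span_monomial_image]
    intro e he
    obtain ⟨d, hdG, hde⟩ := hm (∑ i ∈ s, Finsupp.single i m + e)
      (by rwa [MvPolynomial.mem_support_iff, coeff_monomial_mul, one_mul,
        ← MvPolynomial.mem_support_iff])
    refine ⟨_, Set.mem_image_of_mem _ hdG, fun i => ?_⟩
    by_cases hi : i ∈ s
    · simp [hi]
    · have hdei := hde i
      rw [Finsupp.add_apply, sum_single_apply_of_notMem hi, zero_add] at hdei
      simpa [hi] using hdei
  · rw [Ideal.span_le]
    rintro _ ⟨d, hdG, rfl⟩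
    refine mem_sat_span_singleton_iff.mpr ⟨d.degree, ?_⟩
    refine Ideal.mem_of_dvd _ ?_ (Ideal.subset_span (Set.mem_image_of_mem _ hdG))
    rw [prod_X_pow_eq_monomial_sum_single, monomial_mul, one_mul, monomial_dvd_monomial]
    refine ⟨Or.inr fun i => ?_, one_dvd _⟩
    by_cases hi : i ∈ s
    · rw [Finsupp.add_apply, sum_single_apply_of_mem hi]
      exact le_add_right (d.le_degree i)
    · simp [hi]

end Saturation

theorem stmt4_general {k : Type*} [Field k] {n : ℕ}
    (J : Ideal (MvPolynomial (Fin n) k))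
    (r : ℕ)
    (G : Set (Fin n →₀ ℕ))
    (hGgen : J = Ideal.span ((fun d => (monomial d (1:k) : MvPolynomial (Fin n) k)) '' G)) :
    Phi r J = Ideal.span
      ((fun d : Fin n →₀ ℕ =>
        (monomial (d.filter fun i : Fin n => (i : ℕ) < r) (1:k) :
          MvPolynomial (Fin n) k)) '' G) := by
  rw [Phi, tailProd, hGgen, sat_span_monomial_span_prod_X]
  simp only [Finset.mem_filter, Finset.mem_univ, true_and, not_le]

/-- For a Borel-type monomial ideal `J` with minimal monomial
generators indexed by `G`, the saturation `Φ_r(J) = J : (x_{r+1}⋯x_n)^∞` is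
generated by the monomials obtained from those generators by deleting all factors
`x_{r+1},…,x_n`. -/
theorem stmt4 {k : Type*} [Field k] {n : ℕ}
    (J : Ideal (MvPolynomial (Fin n) k)) (hB : BorelCond J)
    (r : ℕ) (hr1 : 1 ≤ r) (hrn : r ≤ n)
    (G : Set (Fin n →₀ ℕ))
    (hGgen : J = Ideal.span ((fun d => (monomial d (1:k) : MvPolynomial (Fin n) k)) '' G))
    (hGmin : ∀ d ∈ G, IsMinGen J d) :
    Phi r J = Ideal.span
      ((fun d : Fin n →₀ ℕ =>
        (monomial (d.filter fun i : Fin n => (i : ℕ) < r) (1:k) :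
          MvPolynomial (Fin n) k)) '' G) :=
  stmt4_general J r G hGgen
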